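/- Let μ be the environment with S = Ω = {s₀, s⁰⁰, s⁰¹, s¹⁰, s¹¹}, A = {a⁰, a¹}, identity observations, T₀ the point mass at s₀, T(s^{i0} | s₀, a^i) = T(s^{i1} | s₀, a^i) = 1/2, and all other states absorbing. Let μ'' be the deterministic environment with S'' = {s₀⁰, s₀¹, s⁰⁰, s⁰¹, s¹⁰, s¹¹}, the same A, observation set Ω with Obs''(s₀⁰) = Obs''(s₀¹) = s₀ and identity on the others, T₀''(s₀⁰) = T₀''(s₀¹) = 1/2, transitions T''(s⁰⁰ | s₀⁰, a⁰) = 1, T''(s¹⁰ | s₀⁰, a¹) = 1, T''(s⁰¹ | s₀¹, a⁰) = 1, T''(s¹¹ | s₀¹, a¹) = 1, and all other states absorbing. Then: (i) μ and μ'' are 1-equivalent, but (ii) μ and μ'' are NOT 1-counterfactually equivalent; in particular, for the two deterministic policies π⁰ (always play a⁰) and π¹ (always play a¹) and the histories h = s₀a⁰s⁰⁰ and h' = s₀a¹s¹¹, the quantity ∑_{π_μ} μ(π_μ) μ(h | π_μ, π⁰) μ(h' | π_μ, π¹) is strictly positive for μ but equals 0 for μ''. -/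

import Mathlib

open scoped Classical
open Finset

/-- A POMDP without reward function ("environment"): finite sets of states, actions,
observations, a transition kernel `T`, an initial distribution `T0` and an
observation kernel `Obs`, all given as (row-)stochastic matrices of reals. -/
structure Env (S A O : Type) [Fintype S] [Fintype A] [Fintype O] where
  T : S → A → S → ℝ
  T0 : S → ℝ
  Obs : S → O → ℝ
  T_nonneg : ∀ s a s', 0 ≤ T s a s'
  T_sum : ∀ s a, ∑ s', T s a s' = 1
  T0_nonneg : ∀ s, 0 ≤ T0 s
  T0_sum : ∑ s, T0 s = 1
  Obs_nonneg : ∀ s o, 0 ≤ Obs s o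
  Obs_sum : ∀ s, ∑ o, Obs s o = 1

/-- A history `o₀a₁o₁…a_t o_t` is an initial observation together with a list of
action–observation pairs, stored in *reverse chronological order* (newest pair first). -/
abbrev Hist (A O : Type) := O × List (A × O)

/-- `HPrefix h h'` : the history `h` is an initial segment of `h'` (or equal to it). -/
def HPrefix {A O : Type} (h h' : Hist A O) : Prop := h.1 = h'.1 ∧ h.2 <:+ h'.2

/-- A policy maps histories to probability distributions over actions. -/
structure Policy (A O : Type) [Fintype A] where
  act : Hist A O → A → ℝ
  nonneg : ∀ h a, 0 ≤ act h a
  sum_one : ∀ h, ∑ a, act h a = 1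

/-- A deterministic policy: each output distribution is a point mass. -/
def Policy.IsDet {A O : Type} [Fintype A] (π : Policy A O) : Prop :=
  ∀ h, ∃ a, ∀ a', π.act h a' = if a' = a then 1 else 0

variable {S S' S'' A O : Type}

/-- Joint probability of a history together with the final state:
`histStateProb μ π o₀ l s` is the probability under `μ` and `π` of seeing the history
`(o₀, l)` and the state after the last observation being `s`. -/
noncomputable def histStateProb [Fintype S] [Fintype A] [Fintype O]
    (μ : Env S A O) (π : Policy A O) (o0 : O) : List (A × O) → S → ℝ
  | [], s => μ.T0 s * μ.Obs s o0
  | (a, o) :: rest, s =>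
      π.act (o0, rest) a * (∑ s', histStateProb μ π o0 rest s' * μ.T s' a s) * μ.Obs s o

/-- `μ(h | π)`: the probability of the history `h` under policy `π`:
`μ(o₀a₁o₁…a_t o_t | π) = ∑_{s₀…s_t} T₀(s₀)Obs(o₀|s₀)∏_k Obs(o_k|s_k)T(s_k|s_{k-1},a_k)π(a_k|…)`. -/
noncomputable def histProb [Fintype S] [Fintype A] [Fintype O]
    (μ : Env S A O) (π : Policy A O) (h : Hist A O) : ℝ :=
  ∑ s, histStateProb μ π h.1 h.2 s

/-- `μ(h' | h, π)`: conditional probability of a history given another, via Bayes' rule;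
set to `0` when `h` is not an initial segment of `h'` or the conditioning event has
probability `0`. -/
noncomputable def condProb [Fintype S] [Fintype A] [Fintype O]
    (μ : Env S A O) (π : Policy A O) (h h' : Hist A O) : ℝ :=
  if HPrefix h h' ∧ histProb μ π h ≠ 0 then histProb μ π h' / histProb μ π h else 0

/-- `m`-equivalence: all conditional probabilities of histories of length `≤ m`
coincide, for all policies. -/
def MEquiv [Fintype S] [Fintype S'] [Fintype A] [Fintype O]
    (μ : Env S A O) (μ' : Env S' A O) (m : ℕ) : Prop :=
  ∀ (π : Policy A O) (h h' : Hist A O), h.2.length ≤ m → h'.2.length ≤ m →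
    condProb μ π h h' = condProb μ' π h h'

/-- A deterministic environment policy of length `m`: a triple `(T̂₀, T̂, Ô)` with
`T̂₀ ∈ S`, `T̂ : S × A × {1,…,m} → S` (here `Fin m` with value `i` standing for turn `i+1`)
and `Ô : S × {0,…,m} → O`. -/
abbrev EnvPol (S A O : Type) (m : ℕ) := S × (S → A → Fin m → S) × (S → Fin (m + 1) → O)

/-- `μ(π_μ) = T₀(T̂₀) ⬝ ∏_{s,a,i} T(T̂(s,a,i)|s,a) ⬝ ∏_{s,i} Obs(Ô(s,i)|s)`. -/
noncomputable def envPolProb [Fintype S] [Fintype A] [Fintype O]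
    (μ : Env S A O) {m : ℕ} (ep : EnvPol S A O m) : ℝ :=
  μ.T0 ep.1 *
    ((∏ s, ∏ a, ∏ i, μ.T s a (ep.2.1 s a i)) * ∏ s, ∏ i, μ.Obs s (ep.2.2 s i))

/-- The state reached by following the environment policy `ep` along the actions of the
(reverse chronological) action–observation list: `s₀ = T̂₀`, `s_k = T̂(s_{k-1}, a_k, k)`. -/
def epState {m : ℕ} (ep : EnvPol S A O m) : List (A × O) → S
  | [] => ep.1
  | (a, _) :: rest =>
      if h : rest.length < m then ep.2.1 (epState ep rest) a ⟨rest.length, h⟩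
      else epState ep rest

/-- `μ(h | π_μ, π)`: the probability of the history `h = (o₀, l)` when the dynamics are
determined by the environment policy `ep` and the actions are drawn from `π`; it is
`∏_k π(a_k | h_{k-1})` if the observations of `h` match those generated by `ep` along the
actions of `h`, and `0` otherwise. -/
noncomputable def epHistProb {m : ℕ} [Fintype A] (ep : EnvPol S A O m) (π : Policy A O)
    (o0 : O) : List (A × O) → ℝ
  | [] => if ep.2.2 ep.1 0 = o0 then 1 else 0
  | (a, o) :: rest =>
      epHistProb ep π o0 rest * π.act (o0, rest) a *
        (if h : rest.length < m then
          (if ep.2.2 (ep.2.1 (epState ep rest) a ⟨rest.length, h⟩)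
              ⟨rest.length + 1, by omega⟩ = o then 1 else 0)
         else 0)

/-- `m`-counterfactual equivalence: for every finite collection `(h_{t_i}, π_i)` of
history–policy pairs with all `t_i ≤ m`,
`∑_{π_μ} μ(π_μ) ∏_i μ(h_{t_i}|π_μ,π_i) = ∑_{π_{μ'}} μ'(π_{μ'}) ∏_i μ'(h_{t_i}|π_{μ'},π_i)`. -/
def MCounterEquiv [Fintype S] [DecidableEq S] [Fintype S'] [DecidableEq S']
    [Fintype A] [DecidableEq A] [Fintype O]
    (μ : Env S A O) (μ' : Env S' A O) (m : ℕ) : Prop :=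
  ∀ (n : ℕ) (hs : Fin n → Hist A O) (πs : Fin n → Policy A O),
    (∀ i, (hs i).2.length ≤ m) →
    (∑ ep : EnvPol S A O m, envPolProb μ ep * ∏ i, epHistProb ep (πs i) (hs i).1 (hs i).2)
      = ∑ ep : EnvPol S' A O m, envPolProb μ' ep * ∏ i, epHistProb ep (πs i) (hs i).1 (hs i).2

/-- A deterministic environment: every transition and observation distribution is a
point mass. -/
def IsDetEnv [Fintype S] [Fintype A] [Fintype O] (μ : Env S A O) : Prop :=
  (∀ s a, ∃ s', ∀ s'', μ.T s a s'' = if s'' = s' then 1 else 0) ∧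
  (∀ s, ∃ o, ∀ o', μ.Obs s o' = if o' = o then 1 else 0)

/-- `μ(h | s₀ = s, π)` (probability of the history conditional on the initial state),
with the final state summed out below. -/
noncomputable def histStateProbFrom [Fintype S] [Fintype A] [Fintype O]
    (μ : Env S A O) (π : Policy A O) (s0 : S) (o0 : O) : List (A × O) → S → ℝ
  | [], s => (if s = s0 then 1 else 0) * μ.Obs s o0
  | (a, o) :: rest, s =>
      π.act (o0, rest) a *
        (∑ s', histStateProbFrom μ π s0 o0 rest s' * μ.T s' a s) * μ.Obs s o

/-- `μ(h | s₀ = s, π)`. -/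
noncomputable def histProbFrom [Fintype S] [Fintype A] [Fintype O]
    (μ : Env S A O) (π : Policy A O) (s0 : S) (h : Hist A O) : ℝ :=
  ∑ s, histStateProbFrom μ π s0 h.1 h.2 s

/-- The posterior `μ(s₀ = s | h)` over the initial state given a history, computed by
Bayes' rule from any policy `π` with `μ(h|π) > 0` (it is independent of the choice of
such a policy), and set to `0` if no such policy exists. -/
noncomputable def posterior [Fintype S] [Fintype A] [Fintype O]
    (μ : Env S A O) (h : Hist A O) (s : S) : ℝ :=
  if hex : ∃ π : Policy A O, 0 < histProb μ π h then
    μ.T0 s * histProbFrom μ hex.choose s h /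
      ∑ s', μ.T0 s' * histProbFrom μ hex.choose s' h
  else 0

/-- Given `m`, a pure learning process on `μ` is a map `P` from histories of length `≤ m`
to `[0,1]` realized, on some deterministic environment `μ'` that is `m`-counterfactually
equivalent to `μ`, as `P(h) = ∑_{s'} p_{s'} μ'(s₀ = s' | h)` for constants `p_{s'} ∈ [0,1]`. -/
def IsPureLearning [Fintype S] [DecidableEq S] [Fintype A] [DecidableEq A] [Fintype O]
    (μ : Env S A O) (m : ℕ) (P : Hist A O → ℝ) : Prop :=
  (∀ h : Hist A O, h.2.length ≤ m → P h ∈ Set.Icc (0 : ℝ) 1) ∧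
  ∃ (S' : Type) (_ : Fintype S') (_ : DecidableEq S') (μ' : Env S' A O) (p : S' → ℝ),
    IsDetEnv μ' ∧ MCounterEquiv μ μ' m ∧ (∀ s', p s' ∈ Set.Icc (0 : ℝ) 1) ∧
    ∀ h : Hist A O, h.2.length ≤ m → P h = ∑ s', p s' * posterior μ' h s'

/-- First components: the history (in reverse chronological order) generated after `t`
turns in a deterministic environment given by functions `(Td, Od)`, starting from state
`s0` and following the deterministic policy `p`; second component: the state reached. -/
def genHistAux (Td : S → A → S) (Od : S → O) (p : Hist A O → A) (s0 : S) :
    ℕ → List (A × O) × S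
  | 0 => ([], s0)
  | t + 1 =>
      let r := genHistAux Td Od p s0 t
      let a := p (Od s0, r.1)
      let s' := Td r.2 a
      ((a, Od s') :: r.1, s')

/-- `f_{s0}(p)` truncated at length `t`: the unique history of length `t` generated from
the initial state `s0` by the deterministic policy `p` in the deterministic environment
given by the functions `(Td, Od)`. -/
def genHist (Td : S → A → S) (Od : S → O) (p : Hist A O → A) (s0 : S) (t : ℕ) :
    Hist A O :=
  (Od s0, (genHistAux Td Od p s0 t).1)

/-- The fiber `F(f_s)` (for `s` a state of the deterministic environment `(Td', Od')`):
all initial states `s0` of the deterministic environment `(Td, Od)` whose generated-history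
map `f_{s0} : Π₀ → H_m` equals `f_s`. -/
noncomputable def fiber [Fintype S] (Td : S → A → S) (Od : S → O)
    (Td' : S' → A → S') (Od' : S' → O) (m : ℕ) (s : S') : Finset S :=
  Finset.univ.filter fun s0 => ∀ p : Hist A O → A, genHist Td Od p s0 m = genHist Td' Od' p s m

/-! States of `μ` (= observations): `0 = s₀`, `1 = s⁰⁰`, `2 = s⁰¹`, `3 = s¹⁰`, `4 = s¹¹`;
actions `0 = a⁰`, `1 = a¹`.
States of `μ''`: `0 = s₀⁰`, `1 = s₀¹`, `2 = s⁰⁰`, `3 = s⁰¹`, `4 = s¹⁰`, `5 = s¹¹`. -/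

/-- Environment `μ`: one initial state, two choices, four equally likely outcomes,
identity observations, all non-initial states absorbing. -/
noncomputable def muEx : Env (Fin 5) (Fin 2) (Fin 5) where
  T := fun s a s' =>
    if s = 0 then
      (if a = 0 then (if s' = 1 ∨ s' = 2 then (1 : ℝ) / 2 else 0)
       else (if s' = 3 ∨ s' = 4 then (1 : ℝ) / 2 else 0))
    else (if s' = s then 1 else 0)
  T0 := fun s => if s = 0 then 1 else 0
  Obs := fun s o => if o = s then 1 else 0
  T_nonneg := by intro s a s'; split_ifs <;> norm_num
  T_sum := by intro s a; fin_cases s <;> fin_cases a <;> simp [Fin.sum_univ_five] <;> norm_num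
  T0_nonneg := by intro s; split_ifs <;> norm_num
  T0_sum := by simp [Fin.sum_univ_five]
  Obs_nonneg := by intro s o; split_ifs <;> norm_num
  Obs_sum := by intro s; simp [Finset.sum_ite_eq']

/-- The deterministic environment `μ''`: two equally likely initial states (both observed
as `s₀`), with `s₀⁰ →(a⁰) s⁰⁰`, `s₀⁰ →(a¹) s¹⁰`, `s₀¹ →(a⁰) s⁰¹`, `s₀¹ →(a¹) s¹¹`, all
deterministic, other states absorbing: the four outcomes are counterfactually correlated. -/
noncomputable def muExPP : Env (Fin 6) (Fin 2) (Fin 5) where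
  T := fun s a s' =>
    if s = 0 ∨ s = 1 then
      (if s' = (if s = 0 then (if a = 0 then 2 else 4) else (if a = 0 then 3 else 5))
       then 1 else 0)
    else (if s' = s then 1 else 0)
  T0 := fun s => if s = 0 ∨ s = 1 then (1 : ℝ) / 2 else 0
  Obs := fun s o => if o = ![0, 0, 1, 2, 3, 4] s then 1 else 0
  T_nonneg := by intro s a s'; split_ifs <;> norm_num
  T_sum := by intro s a; fin_cases s <;> fin_cases a <;> simp [Finset.sum_ite_eq']
  T0_nonneg := by intro s; split_ifs <;> norm_num
  T0_sum := by simp [Fin.sum_univ_six]; norm_num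
  Obs_nonneg := by intro s o; split_ifs <;> norm_num
  Obs_sum := by intro s; simp [Finset.sum_ite_eq']

/-- The deterministic policy that always plays the action `a`. -/
noncomputable def polConst (a : Fin 2) : Policy (Fin 2) (Fin 5) where
  act := fun _ a' => if a' = a then 1 else 0
  nonneg := by intro h a'; split_ifs <;> norm_num
  sum_one := by intro h; simp [Finset.sum_ite_eq']


/-! In `μ` the outcomes of `a⁰` and of `a¹` at `s₀` are independent fair coins, so the
environment policy that sends `a⁰` to `s⁰⁰` and `a¹` to `s¹¹` at the same time has weight `1/4`.
In `μ''` both outcomes are functions of the one hidden initial state: `s⁰⁰` after `a⁰` forces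
`s₀⁰`, from which `a¹` leads to `s¹⁰`; so that pair of counterfactual histories has joint
probability `0`. The one-step statistics seen by any policy are nevertheless the same:
from the observation `s₀`, each action leads to each of its two outcomes with probability `1/2`. -/

section

variable [Fintype A]

lemma epHistProb_nonneg {m : ℕ} (ep : EnvPol S A O m) (π : Policy A O) (o₀ : O) :
    ∀ l, 0 ≤ epHistProb ep π o₀ l
  | [] => by unfold epHistProb; split_ifs <;> norm_num
  | (a, o) :: rest => by
    unfold epHistProb
    refine mul_nonneg (mul_nonneg (epHistProb_nonneg ep π o₀ rest) (π.nonneg _ _)) ?_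
    split_ifs <;> norm_num

lemma epHistProb_singleton {m : ℕ} (ep : EnvPol S A O (m + 1)) (π : Policy A O)
    (o₀ : O) (a : A) (o : O) :
    epHistProb ep π o₀ [(a, o)] =
      (if ep.2.2 ep.1 0 = o₀ then 1 else 0) * π.act (o₀, []) a *
        (if ep.2.2 (ep.2.1 ep.1 a 0) 1 = o then 1 else 0) := by
  simp [epHistProb, epState]

variable [Fintype S] [Fintype S'] [Fintype O]

lemma histProb_nil (μ : Env S A O) (π : Policy A O) (o₀ : O) :
    histProb μ π (o₀, []) = ∑ s, μ.T0 s * μ.Obs s o₀ := rfl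

lemma histProb_singleton (μ : Env S A O) (π : Policy A O) (o₀ : O) (a : A) (o : O) :
    histProb μ π (o₀, [(a, o)]) =
      π.act (o₀, []) a * ∑ s, (∑ s', μ.T0 s' * μ.Obs s' o₀ * μ.T s' a s) * μ.Obs s o := by
  rw [Finset.mul_sum]
  simp only [histProb, histStateProb, mul_assoc]

lemma mEquiv_of_histProb_eq {μ : Env S A O} {μ' : Env S' A O} {m : ℕ}
    (h : ∀ (π : Policy A O) (h : Hist A O), h.2.length ≤ m → histProb μ π h = histProb μ' π h) :
    MEquiv μ μ' m := by
  intro π h₁ h₂ hl₁ hl₂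
  simp only [condProb, h π h₁ hl₁, h π h₂ hl₂]

lemma envPolProb_nonneg (μ : Env S A O) {m : ℕ} (ep : EnvPol S A O m) :
    0 ≤ envPolProb μ ep :=
  mul_nonneg (μ.T0_nonneg _) <| mul_nonneg
    (prod_nonneg fun _ _ => prod_nonneg fun _ _ => prod_nonneg fun _ _ => μ.T_nonneg _ _ _)
    (prod_nonneg fun _ _ => prod_nonneg fun _ _ => μ.Obs_nonneg _ _)

lemma envPolProb_ne_zero_iff (μ : Env S A O) {m : ℕ} (ep : EnvPol S A O m) :
    envPolProb μ ep ≠ 0 ↔ μ.T0 ep.1 ≠ 0 ∧ (∀ s a i, μ.T s a (ep.2.1 s a i) ≠ 0) ∧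
      ∀ s i, μ.Obs s (ep.2.2 s i) ≠ 0 := by
  simp only [envPolProb, mul_ne_zero_iff, prod_ne_zero_iff, mem_univ, forall_const]

lemma not_mCounterEquiv_of_pair [DecidableEq S] [DecidableEq S'] [DecidableEq A]
    {μ : Env S A O} {μ' : Env S' A O} {m : ℕ} (h₁ h₂ : Hist A O) (π₁ π₂ : Policy A O)
    (hl₁ : h₁.2.length ≤ m) (hl₂ : h₂.2.length ≤ m)
    (hne : ∑ ep : EnvPol S A O m, envPolProb μ ep *
        (epHistProb ep π₁ h₁.1 h₁.2 * epHistProb ep π₂ h₂.1 h₂.2) ≠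
      ∑ ep : EnvPol S' A O m, envPolProb μ' ep *
        (epHistProb ep π₁ h₁.1 h₁.2 * epHistProb ep π₂ h₂.1 h₂.2)) :
    ¬ MCounterEquiv μ μ' m := by
  intro h
  have := h 2 ![h₁, h₂] ![π₁, π₂] (Fin.forall_fin_two.2 ⟨hl₁, hl₂⟩)
  simp only [Fin.prod_univ_two, Matrix.cons_val_zero, Matrix.cons_val_one] at this
  exact hne this

end

lemma muEx_histProb_eq_muExPP (π : Policy (Fin 2) (Fin 5)) (h : Hist (Fin 2) (Fin 5))
    (hl : h.2.length ≤ 1) : histProb muEx π h = histProb muExPP π h := by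
  obtain ⟨o₀, _ | ⟨⟨a, o⟩, _ | _⟩⟩ := h
  · simp only [histProb_nil]
    fin_cases o₀ <;> simp [muEx, muExPP, Fin.sum_univ_six]; norm_num
  · simp only [histProb_singleton]
    congr 1
    fin_cases o₀ <;> fin_cases a <;> fin_cases o <;>
      simp [muEx, muExPP, Fin.sum_univ_five, Fin.sum_univ_six]
  · simp at hl

lemma mEquiv_muEx_muExPP : MEquiv muEx muExPP 1 :=
  mEquiv_of_histProb_eq muEx_histProb_eq_muExPP

lemma muEx_joint_counterfactual_pos :
    0 < ∑ ep : EnvPol (Fin 5) (Fin 2) (Fin 5) 1, envPolProb muEx ep *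
      (epHistProb ep (polConst 0) 0 [(0, 1)] * epHistProb ep (polConst 1) 0 [(1, 4)]) := by
  let ep : EnvPol (Fin 5) (Fin 2) (Fin 5) 1 :=
    (0, fun s a _ => if s = 0 then (if a = 0 then 1 else 4) else s, fun s _ => s)
  have hep : envPolProb muEx ep ≠ 0 := by
    refine (envPolProb_ne_zero_iff muEx ep).2 ⟨by simp [muEx, ep], ?_, by simp [muEx, ep]⟩
    intro s a _
    fin_cases s <;> fin_cases a <;> simp [muEx, ep]
  have h₀ : epHistProb ep (polConst 0) 0 [(0, 1)] = 1 := by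
    simp [epHistProb_singleton, polConst, ep]
  have h₁ : epHistProb ep (polConst 1) 0 [(1, 4)] = 1 := by
    simp [epHistProb_singleton, polConst, ep]
  refine sum_pos' (fun ep _ => mul_nonneg (envPolProb_nonneg _ _)
    (mul_nonneg (epHistProb_nonneg _ _ _ _) (epHistProb_nonneg _ _ _ _))) ⟨ep, by simp, ?_⟩
  rw [h₀, h₁, mul_one, mul_one]
  exact (envPolProb_nonneg muEx ep).lt_of_ne' hep

lemma muExPP_joint_counterfactual_eq_zero :
    ∑ ep : EnvPol (Fin 6) (Fin 2) (Fin 5) 1, envPolProb muExPP ep *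
      (epHistProb ep (polConst 0) 0 [(0, 1)] * epHistProb ep (polConst 1) 0 [(1, 4)]) = 0 := by
  refine sum_eq_zero ?_
  rintro ⟨s₀, Td, Od⟩ -
  by_cases hep : envPolProb muExPP (s₀, Td, Od) = 0
  · rw [hep, zero_mul]
  obtain ⟨hT0, hT, hObs⟩ := (envPolProb_ne_zero_iff muExPP _).1 hep
  have hs₀ : s₀ = 0 ∨ s₀ = 1 := by simpa [muExPP, or_iff_not_imp_left] using hT0
  refine mul_eq_zero_of_right _ ?_
  simp only [epHistProb_singleton, polConst]
  rcases hs₀ with rfl | rfl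
  -- from `s₀⁰`, `a¹` leads to `s¹⁰`, not `s¹¹`; from `s₀¹`, `a⁰` leads to `s⁰¹`, not `s⁰⁰`
  · have hTd : Td 0 1 0 = 4 := by simpa [muExPP] using hT 0 1 0
    have hOd : Od 4 1 = 3 := by_contra fun h => hObs 4 1 (by simp [muExPP, h])
    simp [hTd, hOd]
  · have hTd : Td 1 0 0 = 3 := by simpa [muExPP] using hT 1 0 0
    have hOd : Od 3 1 = 2 := by_contra fun h => hObs 3 1 (by simp [muExPP, h])
    simp [hTd, hOd]

/-- The environments `μ` and `μ''` are `1`-equivalent but NOT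
`1`-counterfactually equivalent; in particular, for the deterministic policies
`π⁰` (always `a⁰`) and `π¹` (always `a¹`) and the histories `h = s₀a⁰s⁰⁰` and
`h' = s₀a¹s¹¹`, the quantity `∑_{π_μ} μ(π_μ) μ(h|π_μ,π⁰) μ(h'|π_μ,π¹)` is strictly
positive for `μ` but equals `0` for `μ''`. -/
theorem muEx_muExPP_equivalent_not_counterfactually_equivalent :
    MEquiv muEx muExPP 1 ∧
    ¬ MCounterEquiv muEx muExPP 1 ∧
    (0 < ∑ ep : EnvPol (Fin 5) (Fin 2) (Fin 5) 1,
        envPolProb muEx ep *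
          (epHistProb ep (polConst 0) 0 [(0, 1)] * epHistProb ep (polConst 1) 0 [(1, 4)])) ∧
    (∑ ep : EnvPol (Fin 6) (Fin 2) (Fin 5) 1,
        envPolProb muExPP ep *
          (epHistProb ep (polConst 0) 0 [(0, 1)] * epHistProb ep (polConst 1) 0 [(1, 4)])) = 0 := by
  refine ⟨mEquiv_muEx_muExPP, ?_, muEx_joint_counterfactual_pos, muExPP_joint_counterfactual_eq_zero⟩
  refine not_mCounterEquiv_of_pair (0, [(0, 1)]) (0, [(1, 4)]) (polConst 0) (polConst 1)
    le_rfl le_rfl ?_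
  rw [muExPP_joint_counterfactual_eq_zero]
  exact muEx_joint_counterfactual_pos.ne'
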